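/- Hypothesis A^s implies hypothesis A^m: if for every m the unique class in H^{4m}(BG(2m+1);ℚ) which extends the squared Euler class e² ∈ H^{4m}(BSG(2m);ℚ) also extends the Pontryagin class p_m ∈ H^{4m}(BTOP(2m+1);ℚ), then for every m the equation e_{2m}² = p_m holds in H^{4m}(BSTOP(2m);ℚ). -/

import Mathlib

/-!
Hypothesis A^s implies hypothesis A^m (Reis–Weiss, "Smooth maps to the plane and
Pontryagin classes II").

We axiomatize, for a fixed `m`, the rational cohomology rings of `BG(2m+1)`,
`BSG(2m)`, `BTOP(2m+1)` and `BSTOP(2m)` (as commutative rings; the grading is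
suppressed, classes live in their natural degrees), together with the
restriction homomorphisms induced by the maps
`BSTOP(2m) → BSG(2m) → BG(2m+1)` and `BSTOP(2m) → BTOP(2m+1) → BG(2m+1)`,
the Euler classes, the Pontryagin class `p_m`, and their standard naturality
properties.
-/

/-- Abstract setup, for a fixed `m`, of the rational cohomology rings of
`BG(2m+1)`, `BSG(2m)`, `BTOP(2m+1)`, `BSTOP(2m)` with restriction maps,
Euler classes and Pontryagin classes. -/
structure CharClassSetup where
  /-- the rational cohomology ring `H^•(BG(2m+1);ℚ)` -/
  HG : Type
  /-- the rational cohomology ring `H^•(BSG(2m);ℚ)` -/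
  HSG : Type
  /-- the rational cohomology ring `H^•(BTOP(2m+1);ℚ)` -/
  HT : Type
  /-- the rational cohomology ring `H^•(BSTOP(2m);ℚ)` -/
  HST : Type
  [instHG : CommRing HG]
  [instHSG : CommRing HSG]
  [instHT : CommRing HT]
  [instHST : CommRing HST]
  /-- restriction along `BSG(2m) → BG(2m+1)` -/
  resG_SG : HG →+* HSG
  /-- restriction along `BTOP(2m+1) → BG(2m+1)` -/
  resG_T : HG →+* HT
  /-- restriction along `BSTOP(2m) → BSG(2m)` -/
  resSG_ST : HSG →+* HST
  /-- restriction along `BSTOP(2m) → BTOP(2m+1)` -/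
  resT_ST : HT →+* HST
  /-- the square of classifying spaces
  `BSTOP(2m) → BSG(2m) → BG(2m+1)` = `BSTOP(2m) → BTOP(2m+1) → BG(2m+1)`
  commutes up to homotopy, hence induces equal maps on cohomology -/
  res_comm : ∀ x : HG, resSG_ST (resG_SG x) = resT_ST (resG_T x)
  /-- the Euler class `e ∈ H^{2m}(BSG(2m);ℚ)` -/
  e : HSG
  /-- the Euler class `e_{2m} ∈ H^{2m}(BSTOP(2m);ℚ)` -/
  eST : HST
  /-- naturality of the Euler class under `BSTOP(2m) → BSG(2m)` -/
  res_e : resSG_ST e = eST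
  /-- the rational Pontryagin class `p_m ∈ H^{4m}(BTOP(2m+1);ℚ)` of Thom–Novikov -/
  p : HT
  /-- the rational Pontryagin class `p_m ∈ H^{4m}(BSTOP(2m);ℚ)` -/
  pST : HST
  /-- naturality and stability of the Pontryagin class under `BSTOP(2m) → BTOP(2m+1)` -/
  res_p : resT_ST p = pST
  /-- there is a unique class in `H^{4m}(BG(2m+1);ℚ)` which extends the squared
  Euler class in `H^{4m}(BSG(2m);ℚ)` -/
  existsUnique_ext : ∃! u : HG, resG_SG u = e ^ 2

attribute [instance] CharClassSetup.instHG CharClassSetup.instHSG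
  CharClassSetup.instHT CharClassSetup.instHST

/-- Hypothesis A^s at `m`: the unique class in `H^{4m}(BG(2m+1);ℚ)` which
extends the squared Euler class `e² ∈ H^{4m}(BSG(2m);ℚ)` also extends the
Pontryagin class `p_m ∈ H^{4m}(BTOP(2m+1);ℚ)`. -/
def HypAs (S : CharClassSetup) : Prop :=
  ∀ u : S.HG, S.resG_SG u = S.e ^ 2 → S.resG_T u = S.p

/-- Hypothesis A^m at `m`: the equation `e_{2m}² = p_m` holds in
`H^{4m}(BSTOP(2m);ℚ)`. -/
def HypAm (S : CharClassSetup) : Prop :=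
  S.eST ^ 2 = S.pST

namespace CharClassSetup

variable (S : CharClassSetup)

theorem eST_sq_eq_resT_ST_resG_T {u : S.HG} (hu : S.resG_SG u = S.e ^ 2) :
    S.eST ^ 2 = S.resT_ST (S.resG_T u) := by
  rw [← S.res_e, ← map_pow, ← hu, S.res_comm]

theorem hypAm_of_hypAs (h : HypAs S) : HypAm S := by
  obtain ⟨u, hu, -⟩ := S.existsUnique_ext
  rw [HypAm, S.eST_sq_eq_resT_ST_resG_T hu, h u hu, S.res_p]

end CharClassSetup

/-- **Hypothesis A^s implies hypothesis A^m**: if for every `m` the unique class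
in `H^{4m}(BG(2m+1);ℚ)` extending the squared Euler class
`e² ∈ H^{4m}(BSG(2m);ℚ)` also extends the Pontryagin class
`p_m ∈ H^{4m}(BTOP(2m+1);ℚ)`, then for every `m` the equation `e_{2m}² = p_m`
holds in `H^{4m}(BSTOP(2m);ℚ)`. -/
theorem hypAs_implies_hypAm (S : ℕ → CharClassSetup)
    (hAs : ∀ m, HypAs (S m)) : ∀ m, HypAm (S m) :=
  fun m => (S m).hypAm_of_hypAs (hAs m)
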